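/- Let μ be a probability measure on ℝ that is symmetric (invariant under x ↦ −x) and let r ∈ (1,2] with m_r = ∫|x|^r dμ(x) < ∞. If (Σ_{j=1}^p b_j)^r + (Σ_{j=1}^p a_j^{r/2})·m_r < 1, then there exist weights γ ∈ (0,∞)^p, ρ ∈ (0,1) and C ≥ 0 such that for every y ∈ ℝ^p and each i ∈ {1,2}: ∫ V_{γ,r}(N_i(y,x)) dμ(x) ≤ ρ·V_{γ,r}(y) + C. -/

import Mathlib

open MeasureTheory

/-- The next lag-vector of the BDAR recursion: first coordinate
`φ₀ + ∑ⱼ φⱼ yⱼ + x √(α₀ + ∑ⱼ αⱼ yⱼ²)`, remaining coordinates shifted from `y`. -/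
noncomputable def nextLag (p : ℕ) (φ0 : ℝ) (φ : Fin p → ℝ) (α0 : ℝ) (α : Fin p → ℝ)
    (y : Fin p → ℝ) (x : ℝ) : Fin p → ℝ :=
  fun k =>
    if _ : (k : ℕ) = 0 then
      φ0 + (∑ j, φ j * y j) + x * Real.sqrt (α0 + ∑ j, α j * y j ^ 2)
    else y ⟨(k : ℕ) - 1, by have := k.isLt; omega⟩

/-- The drift test function `V_{γ,r}(y) = 1 + ∑ₖ γₖ |yₖ|^r`. -/
noncomputable def testV (p : ℕ) (γ : Fin p → ℝ) (r : ℝ) (y : Fin p → ℝ) : ℝ :=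
  1 + ∑ k, γ k * |y k| ^ r

/-!
Write the first coordinate of `N_i(y, x)` as `m + x σ`. Averaging over `±x` (symmetry of `μ`) and
the two-point inequality `|a + x|^r + |a - x|^r ≤ 2 (|a|^r + |x|^r)`, valid for `r ≤ 2`, give
`∫ |m + x σ|^r dμ ≤ |m|^r + σ^r m_r`. Jensen's inequality, with a small extra weight `ε` on the
intercept, bounds `|m|^r` by `(ε + ∑ bⱼ)^(r-1) ∑ bⱼ |yⱼ|^r` up to a constant, and subadditivity of
`t ↦ t^(r/2)` bounds `σ^r` by `∑ aⱼ^(r/2) |yⱼ|^r` up to a constant. Hence the first coordinate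
contributes at most `C + ∑ dⱼ |yⱼ|^r` with `∑ dⱼ < 1` once `ε` is small. The other coordinates only
shift `y`, and weights decreasing along the lags turn "shift plus `d`" into a contraction.
-/

open Finset

lemma abs_rpow_eq_sq_rpow_half (t r : ℝ) : |t| ^ r = (t ^ 2) ^ (r / 2) := by
  rw [← sq_abs t, ← Real.rpow_natCast_mul (abs_nonneg t)]
  congr 1
  ring

lemma rpow_sum_le_sum_rpow {ι : Type*} (s : Finset ι) {p : ℝ} (hp0 : 0 < p) (hp1 : p ≤ 1)
    {f : ι → ℝ} (hf : ∀ i ∈ s, 0 ≤ f i) :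
    (∑ i ∈ s, f i) ^ p ≤ ∑ i ∈ s, f i ^ p := by
  induction s using Finset.cons_induction with
  | empty => simp [Real.zero_rpow hp0.ne']
  | cons a s ha ih =>
    rw [sum_cons, sum_cons]
    have hf' : ∀ i ∈ s, 0 ≤ f i := fun i hi => hf i (mem_cons_of_mem hi)
    calc (f a + ∑ i ∈ s, f i) ^ p ≤ f a ^ p + (∑ i ∈ s, f i) ^ p :=
          Real.rpow_add_le_add_rpow (hf a (mem_cons_self a s)) (sum_nonneg hf') hp0.le hp1
      _ ≤ f a ^ p + ∑ i ∈ s, f i ^ p := by gcongr; exact ih hf'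

lemma rpow_sum_mul_le {ι : Type*} (s : Finset ι) {p : ℝ} (hp : 1 ≤ p) {w f : ι → ℝ}
    (hw : ∀ i, 0 ≤ w i) (hf : ∀ i, 0 ≤ f i) :
    (∑ i ∈ s, w i * f i) ^ p ≤ (∑ i ∈ s, w i) ^ (p - 1) * ∑ i ∈ s, w i * f i ^ p := by
  have hp0 : 0 < p := by linarith
  have hW : 0 ≤ ∑ i ∈ s, w i := sum_nonneg fun i _ => hw i
  have hWf : 0 ≤ ∑ i ∈ s, w i * f i ^ p :=
    sum_nonneg fun i _ => mul_nonneg (hw i) (Real.rpow_nonneg (hf i) p)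
  calc (∑ i ∈ s, w i * f i) ^ p
      ≤ ((∑ i ∈ s, w i) ^ (1 - p⁻¹) * (∑ i ∈ s, w i * f i ^ p) ^ p⁻¹) ^ p := by
        gcongr
        · exact sum_nonneg fun i _ => mul_nonneg (hw i) (hf i)
        · exact Real.inner_le_weight_mul_Lp_of_nonneg s hp w f hw hf
    _ = (∑ i ∈ s, w i) ^ (p - 1) * ∑ i ∈ s, w i * f i ^ p := by
        rw [Real.mul_rpow (Real.rpow_nonneg hW _) (Real.rpow_nonneg hWf _), ← Real.rpow_mul hW,
          ← Real.rpow_mul hWf, inv_mul_cancel₀ hp0.ne', Real.rpow_one, sub_mul, one_mul,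
          inv_mul_cancel₀ hp0.ne']

lemma abs_add_rpow_add_abs_sub_rpow_le {r : ℝ} (hr0 : 0 ≤ r) (hr2 : r ≤ 2) (a x : ℝ) :
    |a + x| ^ r + |a - x| ^ r ≤ 2 * (|a| ^ r + |x| ^ r) := by
  have hs0 : 0 ≤ r / 2 := by linarith
  have hs1 : r / 2 ≤ 1 := by linarith
  simp only [abs_rpow_eq_sq_rpow_half _ r]
  have hmid := (Real.concaveOn_rpow hs0 hs1).2 (Set.mem_Ici.2 (sq_nonneg (a + x)))
    (Set.mem_Ici.2 (sq_nonneg (a - x))) (by norm_num : (0 : ℝ) ≤ 1 / 2)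
    (by norm_num : (0 : ℝ) ≤ 1 / 2) (by norm_num)
  have hsub := Real.rpow_add_le_add_rpow (sq_nonneg a) (sq_nonneg x) hs0 hs1
  have hsum : 1 / 2 * (a + x) ^ 2 + 1 / 2 * (a - x) ^ 2 = a ^ 2 + x ^ 2 := by ring
  simp only [smul_eq_mul, hsum] at hmid
  linarith

lemma add_sum_mul_rpow_le {ι : Type*} [Fintype ι] {r c u : ℝ} (hr : 1 ≤ r) (hc : 0 ≤ c)
    (hu : 0 ≤ u) {w f : ι → ℝ} (hw : ∀ i, 0 ≤ w i) (hf : ∀ i, 0 ≤ f i) :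
    (c * u + ∑ i, w i * f i) ^ r ≤ (c + ∑ i, w i) ^ (r - 1) * (c * u ^ r + ∑ i, w i * f i ^ r) := by
  have h := rpow_sum_mul_le univ hr (w := fun o : Option ι => o.elim c w)
    (f := fun o : Option ι => o.elim u f) (fun o => by cases o <;> simp [hc, hw])
    (fun o => by cases o <;> simp [hu, hf])
  simpa only [Fintype.sum_option, Option.elim_none, Option.elim_some] using h

lemma exists_pos_add_rpow_sub_one_mul_lt {S c r : ℝ} (hS : 0 ≤ S) (hr : 0 < r)
    (h : S ^ r < c) : ∃ ε > 0, (ε + S) ^ (r - 1) * S < c := by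
  have hcont : ContinuousAt (fun ε : ℝ => (ε + S) ^ r) 0 :=
    (continuous_id.add continuous_const).continuousAt.rpow_const (Or.inr hr.le)
  have hlt : ∀ᶠ ε in nhdsWithin 0 (Set.Ioi 0), (ε + S) ^ r < c :=
    nhdsWithin_le_nhds (hcont.eventually (gt_mem_nhds (by simpa using h)))
  obtain ⟨ε, hεlt, hε : 0 < ε⟩ := (hlt.and self_mem_nhdsWithin).exists
  have hpos : 0 < ε + S := by linarith
  refine ⟨ε, hε, lt_of_le_of_lt ?_ hεlt⟩
  rw [Real.rpow_sub_one hpos.ne', div_mul_eq_mul_div, div_le_iff₀ hpos]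
  gcongr
  exact le_add_of_nonneg_left hε.le

section SymmetricInnovation

variable {μ : Measure ℝ} {r : ℝ}

lemma integral_comp_neg_of_map_neg_eq (hsym : μ.map (fun x => -x) = μ) (f : ℝ → ℝ) :
    ∫ x, f (-x) ∂μ = ∫ x, f x ∂μ := by
  conv_rhs => rw [← hsym]
  exact (integral_map_equiv (MeasurableEquiv.neg ℝ) f).symm

lemma abs_add_mul_rpow_add_abs_sub_mul_rpow_le (hr0 : 0 ≤ r) (hr2 : r ≤ 2) (m σ x : ℝ) :
    |m + x * σ| ^ r + |m - x * σ| ^ r ≤ 2 * (|m| ^ r + |σ| ^ r * |x| ^ r) := by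
  simpa only [abs_mul, Real.mul_rpow (abs_nonneg x) (abs_nonneg σ), mul_comm (|x| ^ r)]
    using abs_add_rpow_add_abs_sub_rpow_le hr0 hr2 m (x * σ)

lemma integrable_abs_add_mul_rpow [IsFiniteMeasure μ] (hr0 : 0 ≤ r) (hr2 : r ≤ 2)
    (hmr : Integrable (fun x => |x| ^ r) μ) (m σ : ℝ) :
    Integrable (fun x => |m + x * σ| ^ r) μ := by
  refine (((integrable_const (|m| ^ r)).add (hmr.const_mul (|σ| ^ r))).const_mul 2).mono'
    (by fun_prop) (Filter.Eventually.of_forall fun x => ?_)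
  rw [Real.norm_of_nonneg (by positivity)]
  have := abs_add_mul_rpow_add_abs_sub_mul_rpow_le hr0 hr2 m σ x
  have : 0 ≤ |m - x * σ| ^ r := by positivity
  simp only [Pi.add_apply]
  linarith

lemma integral_abs_add_mul_rpow_le [IsProbabilityMeasure μ] (hsym : μ.map (fun x => -x) = μ)
    (hr0 : 0 ≤ r) (hr2 : r ≤ 2) (hmr : Integrable (fun x => |x| ^ r) μ) (m σ : ℝ) :
    ∫ x, |m + x * σ| ^ r ∂μ ≤ |m| ^ r + |σ| ^ r * ∫ x, |x| ^ r ∂μ := by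
  have hplus := integrable_abs_add_mul_rpow hr0 hr2 hmr m σ
  have hminus : Integrable (fun x => |m - x * σ| ^ r) μ := by
    simpa only [mul_neg, ← sub_eq_add_neg] using integrable_abs_add_mul_rpow hr0 hr2 hmr m (-σ)
  have hreflect : ∫ x, |m - x * σ| ^ r ∂μ = ∫ x, |m + x * σ| ^ r ∂μ := by
    simpa only [neg_mul, ← sub_eq_add_neg] using
      integral_comp_neg_of_map_neg_eq hsym (fun x => |m + x * σ| ^ r)
  have hsum : ∫ x, (|m + x * σ| ^ r + |m - x * σ| ^ r) ∂μ
      ≤ ∫ x, 2 * (|m| ^ r + |σ| ^ r * |x| ^ r) ∂μ := integral_mono (hplus.add hminus)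
    (((integrable_const _).add (hmr.const_mul _)).const_mul 2)
    (abs_add_mul_rpow_add_abs_sub_mul_rpow_le hr0 hr2 m σ)
  rw [integral_add hplus hminus, hreflect, integral_const_mul,
    integral_add (integrable_const _) (hmr.const_mul _), integral_const, integral_const_mul] at hsum
  simp only [probReal_univ, one_smul] at hsum
  linarith

end SymmetricInnovation

section PartialSum

variable {M : Type*} [AddCommMonoid M] [PartialOrder M] [IsOrderedAddMonoid M]

lemma Fin.partialSum_nonneg {n : ℕ} {d : Fin n → M} (hd : ∀ j, 0 ≤ d j) (k : Fin (n + 1)) :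
    0 ≤ Fin.partialSum d k :=
  List.sum_nonneg fun _ ha => by
    obtain ⟨j, rfl⟩ := List.mem_ofFn.1 (List.mem_of_mem_take ha)
    exact hd j

lemma Fin.partialSum_le_sum {n : ℕ} {d : Fin n → M} (hd : ∀ j, 0 ≤ d j) (k : Fin (n + 1)) :
    Fin.partialSum d k ≤ ∑ j, d j := by
  rw [← List.sum_ofFn]
  refine (List.take_sublist _ _).sum_le_sum fun _ ha => ?_
  obtain ⟨j, rfl⟩ := List.mem_ofFn.1 ha
  exact hd j

end PartialSum

/-- The weights `γₖ = 1 - (d₀ + ⋯ + d_{k-1}) - k η` satisfy `γₖ₊₁ + dₖ = γₖ - η ≤ (1 - η) γₖ`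
since `γₖ ≤ 1`, and `η = (1 - ∑ d) / (n + 2)` keeps them positive. -/
lemma exists_weights_succ_add_le_mul {n : ℕ} (d : Fin n → ℝ) (hd : ∀ j, 0 ≤ d j)
    (hsum : ∑ j, d j < 1) :
    ∃ γ : Fin (n + 1) → ℝ, γ 0 = 1 ∧ (∀ k, 0 < γ k) ∧
      ∃ ρ ∈ Set.Ioo (0 : ℝ) 1, ∀ k : Fin n, γ k.succ + d k ≤ ρ * γ k.castSucc := by
  set η := (1 - ∑ j, d j) / (n + 2) with hη
  have hη0 : 0 < η := div_pos (by linarith) (by positivity)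
  have hslack : 1 - ∑ j, d j = (n + 2) * η := by rw [hη]; field_simp
  have hη1 : η < 1 := by
    have := sum_nonneg fun j (_ : j ∈ univ) => hd j
    nlinarith [(n.cast_nonneg : (0 : ℝ) ≤ n)]
  refine ⟨fun k => 1 - Fin.partialSum d k - k * η, by simp, fun k => ?_,
    1 - η, ⟨by linarith, by linarith⟩, fun k => ?_⟩
  · have hk : (k : ℝ) ≤ n := by exact_mod_cast Nat.lt_succ_iff.mp k.isLt
    have := Fin.partialSum_le_sum hd k
    nlinarith
  · have := Fin.partialSum_nonneg hd k.castSucc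
    simp only [Fin.partialSum_succ, Fin.val_succ, Fin.val_castSucc, Nat.cast_add, Nat.cast_one]
    nlinarith [mul_nonneg hη0.le (mul_nonneg k.val.cast_nonneg hη0.le)]

lemma sum_shift_add_le_mul_sum {q : ℕ} {γ : Fin (q + 2) → ℝ} {d : Fin (q + 1) → ℝ} {ρ : ℝ}
    (hγ : ∀ k, 0 ≤ γ k) (hdrift : ∀ k, γ k.succ + d k ≤ ρ * γ k.castSucc)
    {z : Fin (q + 1) → ℝ} (hz : ∀ k, 0 ≤ z k) :
    ∑ k : Fin q, γ k.succ.castSucc * z k.castSucc + ∑ k, d k * z k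
      ≤ ρ * ∑ k, γ k.castSucc * z k := by
  calc ∑ k : Fin q, γ k.succ.castSucc * z k.castSucc + ∑ k, d k * z k
      ≤ ∑ k, γ k.succ * z k + ∑ k, d k * z k := by
        gcongr
        rw [Fin.sum_univ_castSucc (fun k => γ k.succ * z k)]
        exact le_add_of_nonneg_right (mul_nonneg (hγ _) (hz _))
    _ = ∑ k, (γ k.succ + d k) * z k := by rw [← sum_add_distrib]; simp only [add_mul]
    _ ≤ ∑ k, ρ * γ k.castSucc * z k := by gcongr with k; exacts [hz k, hdrift k]
    _ = ρ * ∑ k, γ k.castSucc * z k := by rw [mul_sum]; simp only [mul_assoc]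

section FirstCoordinate

variable {ι : Type*} [Fintype ι] {r : ℝ}

lemma abs_add_sum_mul_rpow_le (hr : 1 ≤ r) {ε A c : ℝ} (hε : 0 < ε) {φ b : ι → ℝ}
    (hc : |c| ≤ A) (hφ : ∀ j, |φ j| ≤ b j) (y : ι → ℝ) :
    |c + ∑ j, φ j * y j| ^ r
      ≤ (ε + ∑ j, b j) ^ (r - 1) * (ε * (A / ε) ^ r + ∑ j, b j * |y j| ^ r) := by
  have hb : ∀ j, 0 ≤ b j := fun j => (abs_nonneg _).trans (hφ j)
  have hA : 0 ≤ A := (abs_nonneg c).trans hc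
  calc |c + ∑ j, φ j * y j| ^ r ≤ (ε * (A / ε) + ∑ j, b j * |y j|) ^ r := by
        gcongr
        rw [mul_div_cancel₀ A hε.ne']
        calc |c + ∑ j, φ j * y j| ≤ |c| + ∑ j, |φ j * y j| :=
              (abs_add_le _ _).trans (by gcongr; exact abs_sum_le_sum_abs _ _)
          _ ≤ A + ∑ j, b j * |y j| := by
              gcongr with j
              rw [abs_mul]
              exact mul_le_mul_of_nonneg_right (hφ j) (abs_nonneg _)
    _ ≤ _ := add_sum_mul_rpow_le hr hε.le (div_nonneg hA hε.le) hb (fun j => abs_nonneg _)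

lemma sqrt_add_sum_mul_sq_rpow_le (hr0 : 0 < r) (hr2 : r ≤ 2) {c B : ℝ} {α a : ι → ℝ}
    (hc : 0 ≤ c) (hcB : c ≤ B) (hα : ∀ j, 0 ≤ α j) (hαa : ∀ j, α j ≤ a j) (y : ι → ℝ) :
    √(c + ∑ j, α j * y j ^ 2) ^ r ≤ B ^ (r / 2) + ∑ j, a j ^ (r / 2) * |y j| ^ r := by
  have hs0 : 0 < r / 2 := by linarith
  have hs1 : r / 2 ≤ 1 := by linarith
  have ha : ∀ j, 0 ≤ a j := fun j => (hα j).trans (hαa j)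
  have hu : 0 ≤ c + ∑ j, α j * y j ^ 2 :=
    add_nonneg hc (sum_nonneg fun j _ => mul_nonneg (hα j) (sq_nonneg _))
  have hv : ∀ j, 0 ≤ a j * y j ^ 2 := fun j => mul_nonneg (ha j) (sq_nonneg _)
  rw [Real.sqrt_eq_rpow, ← Real.rpow_mul hu, one_div_mul_eq_div]
  calc (c + ∑ j, α j * y j ^ 2) ^ (r / 2) ≤ (B + ∑ j, a j * y j ^ 2) ^ (r / 2) := by
        gcongr with j
        exact hαa j
    _ ≤ B ^ (r / 2) + (∑ j, a j * y j ^ 2) ^ (r / 2) :=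
        Real.rpow_add_le_add_rpow (hc.trans hcB) (sum_nonneg fun j _ => hv j) hs0.le hs1
    _ ≤ B ^ (r / 2) + ∑ j, (a j * y j ^ 2) ^ (r / 2) := by
        gcongr
        exact rpow_sum_le_sum_rpow _ hs0 hs1 fun j _ => hv j
    _ = B ^ (r / 2) + ∑ j, a j ^ (r / 2) * |y j| ^ r := by
        simp only [Real.mul_rpow (ha _) (sq_nonneg _), abs_rpow_eq_sq_rpow_half _ r]

lemma integral_abs_nextLag_rpow_le {μ : Measure ℝ} [IsProbabilityMeasure μ]
    (hsym : μ.map (fun x => -x) = μ) (hr1 : 1 ≤ r) (hr2 : r ≤ 2)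
    (hmr : Integrable (fun x => |x| ^ r) μ) {ε A B c₀ a₀ : ℝ} (hε : 0 < ε)
    {φ b α a : ι → ℝ} (hc₀ : |c₀| ≤ A) (hφ : ∀ j, |φ j| ≤ b j) (ha₀ : 0 ≤ a₀) (ha₀B : a₀ ≤ B)
    (hα : ∀ j, 0 ≤ α j) (hαa : ∀ j, α j ≤ a j) (y : ι → ℝ) :
    ∫ x, |c₀ + ∑ j, φ j * y j + x * √(a₀ + ∑ j, α j * y j ^ 2)| ^ r ∂μ
      ≤ ((ε + ∑ j, b j) ^ (r - 1) * (ε * (A / ε) ^ r) + B ^ (r / 2) * ∫ x, |x| ^ r ∂μ)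
        + ∑ j, ((ε + ∑ j, b j) ^ (r - 1) * b j + a j ^ (r / 2) * ∫ x, |x| ^ r ∂μ)
          * |y j| ^ r := by
  have hmr0 : 0 ≤ ∫ x, |x| ^ r ∂μ := integral_nonneg fun x => by positivity
  calc _ ≤ |c₀ + ∑ j, φ j * y j| ^ r
          + |√(a₀ + ∑ j, α j * y j ^ 2)| ^ r * ∫ x, |x| ^ r ∂μ :=
        integral_abs_add_mul_rpow_le hsym (by linarith) hr2 hmr _ _
    _ ≤ (ε + ∑ j, b j) ^ (r - 1) * (ε * (A / ε) ^ r + ∑ j, b j * |y j| ^ r)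
          + (B ^ (r / 2) + ∑ j, a j ^ (r / 2) * |y j| ^ r) * ∫ x, |x| ^ r ∂μ := by
        rw [abs_of_nonneg (Real.sqrt_nonneg _)]
        gcongr
        · exact abs_add_sum_mul_rpow_le hr1 hε hc₀ hφ y
        · exact sqrt_add_sum_mul_sq_rpow_le (by linarith) hr2 ha₀ ha₀B hα hαa y
    _ = _ := by
        simp only [mul_add, add_mul, mul_sum, sum_mul, sum_add_distrib]
        ring_nf

end FirstCoordinate

lemma testV_nextLag {q : ℕ} (γ : Fin (q + 1) → ℝ) (r φ0 : ℝ) (φ : Fin (q + 1) → ℝ) (α0 : ℝ)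
    (α y : Fin (q + 1) → ℝ) (x : ℝ) :
    testV (q + 1) γ r (nextLag (q + 1) φ0 φ α0 α y x)
      = 1 + γ 0 * |φ0 + ∑ j, φ j * y j + x * √(α0 + ∑ j, α j * y j ^ 2)| ^ r
        + ∑ k : Fin q, γ k.succ * |y k.castSucc| ^ r := by
  simp only [testV, nextLag, Fin.val_eq_zero_iff, Fin.sum_univ_succ, add_assoc, dite_eq_ite,
    ↓reduceIte, Fin.succ_ne_zero, Fin.val_succ, add_tsub_cancel_right, add_right_inj]
  rfl

lemma integral_testV_nextLag {μ : Measure ℝ} [IsProbabilityMeasure μ] {r : ℝ} (hr0 : 0 ≤ r)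
    (hr2 : r ≤ 2) (hmr : Integrable (fun x => |x| ^ r) μ) {q : ℕ} (γ : Fin (q + 1) → ℝ)
    (φ0 : ℝ) (φ : Fin (q + 1) → ℝ) (α0 : ℝ) (α y : Fin (q + 1) → ℝ) :
    ∫ x, testV (q + 1) γ r (nextLag (q + 1) φ0 φ α0 α y x) ∂μ
      = 1 + γ 0 * ∫ x, |φ0 + ∑ j, φ j * y j + x * √(α0 + ∑ j, α j * y j ^ 2)| ^ r ∂μ
        + ∑ k : Fin q, γ k.succ * |y k.castSucc| ^ r := by
  set f := fun x => |φ0 + ∑ j, φ j * y j + x * √(α0 + ∑ j, α j * y j ^ 2)| ^ r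
  have hint : Integrable (fun x => γ 0 * f x) μ :=
    (integrable_abs_add_mul_rpow hr0 hr2 hmr _ _).const_mul (γ 0)
  simp only [testV_nextLag]
  rw [integral_add (f := fun x => 1 + γ 0 * f x) ((integrable_const 1).add hint)
      (integrable_const _), integral_add (integrable_const 1) hint, integral_const_mul]
  simp

lemma Fin.apply_le_max_zero_one {α : Type*} [LinearOrder α] (f : Fin 2 → α) (i : Fin 2) :
    f i ≤ max (f 0) (f 1) := by
  fin_cases i
  exacts [le_max_left _ _, le_max_right _ _]

theorem exists_drift_testV_nextLag_of_le {q : ℕ} {μ : Measure ℝ} [IsProbabilityMeasure μ]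
    (hsym : μ.map (fun x => -x) = μ) {r : ℝ} (hr1 : 1 < r) (hr2 : r ≤ 2)
    (hmr : Integrable (fun x => |x| ^ r) μ) {A B : ℝ} (hA : 0 ≤ A) (hB : 0 ≤ B)
    {b a : Fin (q + 1) → ℝ} (hb : ∀ j, 0 ≤ b j) (ha : ∀ j, 0 ≤ a j)
    (hcond : (∑ j, b j) ^ r + (∑ j, a j ^ (r / 2)) * ∫ x, |x| ^ r ∂μ < 1) :
    ∃ γ : Fin (q + 1) → ℝ, (∀ k, 0 < γ k) ∧ ∃ ρ ∈ Set.Ioo (0 : ℝ) 1, ∃ C ≥ 0,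
      ∀ (c₀ a₀ : ℝ) (φ α y : Fin (q + 1) → ℝ), |c₀| ≤ A → (∀ j, |φ j| ≤ b j) → 0 ≤ a₀ →
        a₀ ≤ B → (∀ j, 0 ≤ α j) → (∀ j, α j ≤ a j) →
        ∫ x, testV (q + 1) γ r (nextLag (q + 1) c₀ φ a₀ α y x) ∂μ
          ≤ ρ * testV (q + 1) γ r y + C := by
  set mr := ∫ x, |x| ^ r ∂μ
  have hmr0 : 0 ≤ mr := integral_nonneg fun x => by positivity
  obtain ⟨ε, hε, hεlt⟩ := exists_pos_add_rpow_sub_one_mul_lt (sum_nonneg fun j _ => hb j)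
    (by linarith) (lt_sub_iff_add_lt.2 hcond)
  set d : Fin (q + 1) → ℝ := fun j => (ε + ∑ j, b j) ^ (r - 1) * b j + a j ^ (r / 2) * mr
  have hεb : 0 ≤ ε + ∑ j, b j := add_nonneg hε.le (sum_nonneg fun j _ => hb j)
  have hd : ∀ j, 0 ≤ d j := fun j =>
    add_nonneg (mul_nonneg (Real.rpow_nonneg hεb _) (hb j))
      (mul_nonneg (Real.rpow_nonneg (ha j) _) hmr0)
  have hdsum : ∑ j, d j < 1 := by
    simp only [d, sum_add_distrib, ← mul_sum, ← sum_mul]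
    linarith
  obtain ⟨γ, hγ0, hγpos, ρ, hρ, hγd⟩ := exists_weights_succ_add_le_mul d hd hdsum
  have hC : 0 ≤ (ε + ∑ j, b j) ^ (r - 1) * (ε * (A / ε) ^ r) + B ^ (r / 2) * mr :=
    add_nonneg (mul_nonneg (Real.rpow_nonneg hεb _)
      (mul_nonneg hε.le (Real.rpow_nonneg (div_nonneg hA hε.le) _)))
      (mul_nonneg (Real.rpow_nonneg hB _) hmr0)
  set C := (ε + ∑ j, b j) ^ (r - 1) * (ε * (A / ε) ^ r) + B ^ (r / 2) * mr
  refine ⟨fun k => γ k.castSucc, fun k => hγpos _, ρ, hρ, 1 + C, by linarith,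
    fun c₀ a₀ φ α y hc₀ hφ ha₀ ha₀B hα hαa => ?_⟩
  have hshift := sum_shift_add_le_mul_sum (fun k => (hγpos k).le) hγd
    (z := fun k => |y k| ^ r) (fun k => Real.rpow_nonneg (abs_nonneg _) _)
  calc _ = 1 + ∫ x, |c₀ + ∑ j, φ j * y j + x * √(a₀ + ∑ j, α j * y j ^ 2)| ^ r ∂μ
          + ∑ k : Fin q, γ k.succ.castSucc * |y k.castSucc| ^ r := by
        rw [integral_testV_nextLag (by linarith) hr2 hmr]
        simp [hγ0]
    _ ≤ 1 + (C + ∑ j, d j * |y j| ^ r) + ∑ k : Fin q, γ k.succ.castSucc * |y k.castSucc| ^ r := by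
        gcongr
        exact integral_abs_nextLag_rpow_le hsym hr1.le hr2 hmr hε hc₀ hφ ha₀ ha₀B hα hαa y
    _ ≤ ρ * testV (q + 1) (fun k => γ k.castSucc) r y + (1 + C) := by
        rw [testV]
        linarith [hρ.1]

/-- Drift condition for the BDAR model, case `r ∈ (1,2]` with symmetric innovations: if
`(∑ⱼ bⱼ)^r + (∑ⱼ aⱼ^{r/2}) m_r < 1` then there are weights `γ`, `ρ ∈ (0,1)` and `C ≥ 0` with
`∫ V_{γ,r}(N_i(y,x)) dμ(x) ≤ ρ V_{γ,r}(y) + C` for all `y` and both regimes. -/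
theorem bdar_drift_condition_mid_r (p : ℕ) (hp : 1 ≤ p)
    (φ0 : Fin 2 → ℝ) (φ : Fin 2 → Fin p → ℝ)
    (α0 : Fin 2 → ℝ) (α : Fin 2 → Fin p → ℝ)
    (hα0 : ∀ i, 0 < α0 i) (hα : ∀ i j, 0 ≤ α i j)
    (μ : Measure ℝ) [IsProbabilityMeasure μ]
    (hsym : μ.map (fun x => -x) = μ)
    (r : ℝ) (hr : r ∈ Set.Ioc (1 : ℝ) 2)
    (hmr : Integrable (fun x => |x| ^ r) μ)
    (hcond : (∑ j, max |φ 0 j| |φ 1 j|) ^ r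
        + (∑ j, (max (α 0 j) (α 1 j)) ^ (r / 2)) * (∫ x, |x| ^ r ∂μ) < 1) :
    ∃ γ : Fin p → ℝ, (∀ k, 0 < γ k) ∧
      ∃ ρ : ℝ, ρ ∈ Set.Ioo (0 : ℝ) 1 ∧ ∃ C : ℝ, 0 ≤ C ∧
        ∀ y : Fin p → ℝ, ∀ i : Fin 2,
          ∫ x, testV p γ r (nextLag p (φ0 i) (φ i) (α0 i) (α i) y x) ∂μ
            ≤ ρ * testV p γ r y + C := by
  obtain ⟨hr1, hr2⟩ := hr
  obtain ⟨q, rfl⟩ : ∃ q, p = q + 1 := ⟨p - 1, by omega⟩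
  obtain ⟨γ, hγ, ρ, hρ, C, hC, hdrift⟩ := exists_drift_testV_nextLag_of_le hsym hr1 hr2 hmr
    ((abs_nonneg _).trans (le_max_left _ _)) ((hα0 0).le.trans (le_max_left _ _))
    (fun j => (abs_nonneg _).trans (le_max_left _ _)) (fun j => (hα 0 j).trans (le_max_left _ _))
    hcond
  refine ⟨γ, hγ, ρ, hρ, C, hC, fun y i => hdrift _ _ _ _ y ?_ ?_ (hα0 i).le ?_ (hα i) ?_⟩
  · exact Fin.apply_le_max_zero_one (fun i => |φ0 i|) i
  · exact fun j => Fin.apply_le_max_zero_one (fun i => |φ i j|) i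
  · exact Fin.apply_le_max_zero_one α0 i
  · exact fun j => Fin.apply_le_max_zero_one (fun i => α i j) i
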